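/- arXiv:1601.04652 — 2 statements merged into one kernel-verified Lean document; each statement's English description precedes it below -/
import Mathlib

section
/- Let σ > 0, v_c := √2·σ, f(x) := x²/(2σ²), and let v ≥ √2·v_c. Set y := (v − √(v² − 2v_c²))/2 and u := v − 2y. Then: (i) y² − v·y + σ² = 0; (ii) u = √(v² − 2v_c²); (iii) the pair (y, u) solves the system f'(v) = f'(y) + f'(y + u) and −f(y) + f(v) + (y − v)·f'(v) + 1 − f(y + u) + u·f'(y + u) = 0; and (iv) σ·(f'(v) − f'(y)) = (v + √(v² − 2v_c²))/(√2·v_c), i.e. f'(v) − f'(y) = α(v)/σ with α(v) = (v + √(v² − 2v_c²))/(√2·v_c). -/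
/-!
The slowdown velocity `y` is the smaller root of `y² - v y + σ² = 0`, whose discriminant is
`v² - 2 v_c² = v² - 4σ²`. Since `f' x = x / σ²` is linear, the first stationarity equation only
says `v = y + (y + u)`, i.e. `u = v - 2y`, and the second one is `1/σ²` times the quadratic
`y² - v y + σ²`. Finally `σ (f' v - f' y) = (v - y) / σ` and `v - y = (v + √(v² - 4σ²)) / 2`.
-/

open Real

lemma deriv_sq_div_const (c x : ℝ) : deriv (fun x : ℝ => x ^ 2 / c) x = 2 * x / c := by
  simp [deriv_div_const]

lemma quadratic_root_of_eq_sub_sqrt {σ v y : ℝ} (hv : 4 * σ ^ 2 ≤ v ^ 2)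
    (hy : y = (v - √(v ^ 2 - 4 * σ ^ 2)) / 2) : y ^ 2 - v * y + σ ^ 2 = 0 := by
  have hdiscrim : discrim 1 (-v) (σ ^ 2) = √(v ^ 2 - 4 * σ ^ 2) * √(v ^ 2 - 4 * σ ^ 2) := by
    rw [mul_self_sqrt (by linarith), discrim]
    ring
  have hroot := (quadratic_eq_zero_iff one_ne_zero hdiscrim y).mpr (Or.inr (by rw [hy]; ring))
  linear_combination hroot

lemma stationarity_of_quadratic {σ v y u : ℝ} (hσ : σ ≠ 0) (hquad : y ^ 2 - v * y + σ ^ 2 = 0)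
    (hu : u = v - 2 * y) (f : ℝ → ℝ) (hf : f = fun x => x ^ 2 / (2 * σ ^ 2)) :
    deriv f v = deriv f y + deriv f (y + u) ∧
      -(f y) + f v + (y - v) * deriv f v + 1 - f (y + u) + u * deriv f (y + u) = 0 := by
  subst hf hu
  simp only [deriv_sq_div_const]
  constructor
  · field_simp
    ring
  · field_simp
    linear_combination 2 * hquad

/-- second regime of the L-BBM analysis for f(x) = x²/(2σ²), v_c = √2·σ,
v ≥ √2·v_c: y = (v − √(v² − 2v_c²))/2 and u = v − 2y solve the stationarity system, and
σ·(f'(v) − f'(y)) = (v + √(v² − 2v_c²))/(√2·v_c). -/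
theorem stmt_7 (σ v : ℝ) (hσ : 0 < σ) (vc : ℝ) (hvc : vc = Real.sqrt 2 * σ)
    (hv : Real.sqrt 2 * vc ≤ v)
    (f : ℝ → ℝ) (hfdef : f = fun x => x ^ 2 / (2 * σ ^ 2))
    (y u : ℝ) (hy : y = (v - Real.sqrt (v ^ 2 - 2 * vc ^ 2)) / 2)
    (hu : u = v - 2 * y) :
    y ^ 2 - v * y + σ ^ 2 = 0 ∧
    u = Real.sqrt (v ^ 2 - 2 * vc ^ 2) ∧
    (deriv f v = deriv f y + deriv f (y + u) ∧
      -(f y) + f v + (y - v) * deriv f v + 1 - f (y + u) + u * deriv f (y + u) = 0) ∧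
    σ * (deriv f v - deriv f y)
      = (v + Real.sqrt (v ^ 2 - 2 * vc ^ 2)) / (Real.sqrt 2 * vc) := by
  have hsqrt2 : √2 * vc = 2 * σ := by rw [hvc, ← mul_assoc, mul_self_sqrt zero_le_two]
  have hvc2 : 2 * vc ^ 2 = 4 * σ ^ 2 := by rw [hvc, mul_pow, sq_sqrt zero_le_two]; ring
  rw [hsqrt2] at hv ⊢
  rw [hvc2] at hy ⊢
  have hquad := quadratic_root_of_eq_sub_sqrt (by nlinarith) hy
  refine ⟨hquad, by rw [hu, hy]; ring, stationarity_of_quadratic hσ.ne' hquad hu f hfdef, ?_⟩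
  subst hfdef
  simp only [deriv_sq_div_const]
  rw [hy]
  field_simp
  ring
end

section
/- Let σ > 0, v ≥ 0, and 0 < τ < t. Then ∫_{−∞}^{vτ} (2πσ²τ)^{−1/2}·e^{τ − y²/(2σ²τ)} · ( ∫_{vt}^∞ (2πσ²(t − τ))^{−1/2}·e^{(t−τ) − (z−y)²/(2σ²(t−τ))} dz )² dy ≤ exp(−(v²/(2σ²) − 1)·(2t − τ)). -/
/-!
Both kernels are `e^r` times a Gaussian density. For `y ≤ vτ ≤ vt` the inner integral is a
Gaussian tail, at most `e^(t-τ) exp (-(vt - y)² / (2σ²(t - τ)))`. With this bound the integrand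
in `y` becomes, after completing the square, at most `exp (-(v²/(2σ²) - 1)(2t - τ))` times the
Gaussian density of mean `vτ` and variance `σ²τ`, which integrates to at most one.
-/

open MeasureTheory ProbabilityTheory Real Set
open scoped NNReal

lemma setIntegral_le_of_le_mul_gaussianPDFReal {f : ℝ → ℝ} {s : Set ℝ} {A μ : ℝ} {v : ℝ≥0}
    (hv : v ≠ 0) (hs : MeasurableSet s) (hA : 0 ≤ A) (hf_nonneg : ∀ x ∈ s, 0 ≤ f x)
    (hf_le : ∀ x ∈ s, f x ≤ A * gaussianPDFReal μ v x) :
    ∫ x in s, f x ≤ A := by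
  have hg : Integrable fun x => A * gaussianPDFReal μ v x :=
    (integrable_gaussianPDFReal μ v).const_mul A
  calc ∫ x in s, f x ≤ ∫ x in s, A * gaussianPDFReal μ v x :=
        integral_mono_of_nonneg ((ae_restrict_mem hs).mono hf_nonneg) hg.restrict
          ((ae_restrict_mem hs).mono hf_le)
    _ ≤ ∫ x, A * gaussianPDFReal μ v x :=
        setIntegral_le_integral hg (.of_forall fun x => mul_nonneg hA (gaussianPDFReal_nonneg ..))
    _ = A := by rw [integral_const_mul, integral_gaussianPDFReal_eq_one μ hv, mul_one]

/-- For `y ≤ a ≤ z` we have `(z - y)² ≥ (a - y)² + (z - a)²`, so beyond `a` the density centred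
at `y` is dominated by `exp (-(a - y)² / (2v))` times the density centred at `a`. -/
lemma setIntegral_Ioi_gaussianPDFReal_le {y a : ℝ} (hya : y ≤ a) {v : ℝ≥0} (hv : v ≠ 0) :
    ∫ z in Ioi a, gaussianPDFReal y v z ≤ exp (-(a - y) ^ 2 / (2 * v)) := by
  refine setIntegral_le_of_le_mul_gaussianPDFReal (μ := a) hv measurableSet_Ioi (exp_nonneg _)
    (fun z _ => gaussianPDFReal_nonneg ..) fun z hz => ?_
  have hsq : (a - y) ^ 2 + (z - a) ^ 2 ≤ (z - y) ^ 2 := by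
    nlinarith [mul_nonneg (sub_nonneg.2 ((mem_Ioi.1 hz).le)) (sub_nonneg.2 hya)]
  simp only [gaussianPDFReal, mul_left_comm (exp _), ← exp_add, ← add_div]
  gcongr
  linarith

lemma one_div_sqrt_mul_exp_eq_exp_mul_gaussianPDFReal {s τ : ℝ} (hsτ : 0 ≤ s * τ) (r μ x : ℝ) :
    1 / √(2 * π * s * τ) * exp (r - (x - μ) ^ 2 / (2 * s * τ))
      = exp r * gaussianPDFReal μ (s * τ).toNNReal x := by
  rw [gaussianPDFReal, Real.coe_toNNReal _ hsτ, sub_eq_add_neg, exp_add, neg_div]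
  ring_nf

/-- The difference of the two sides is `(vt - y)(vt - y - v(t - τ)) / (s(t - τ))`, and both
factors are nonnegative since `y ≤ vτ`. -/
lemma second_moment_exponent_le {s v τ t y : ℝ} (hs : 0 < s) (hv : 0 ≤ v) (hτ : 0 < τ) (hτt : τ < t)
    (hy : y ≤ v * τ) :
    τ - y ^ 2 / (2 * (s * τ)) + 2 * (t - τ) - (v * t - y) ^ 2 / (s * (t - τ))
      ≤ -(v ^ 2 / (2 * s) - 1) * (2 * t - τ) - (y - v * τ) ^ 2 / (2 * (s * τ)) := by
  have htτ : 0 < t - τ := sub_pos.2 hτt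
  have hdiff : -(v ^ 2 / (2 * s) - 1) * (2 * t - τ) - (y - v * τ) ^ 2 / (2 * (s * τ))
      - (τ - y ^ 2 / (2 * (s * τ)) + 2 * (t - τ) - (v * t - y) ^ 2 / (s * (t - τ)))
      = (v * t - y) * (v * t - y - v * (t - τ)) / (s * (t - τ)) := by
    field_simp
    ring
  have hgap : 0 ≤ v * t - y - v * (t - τ) := by linarith
  have hdist : 0 ≤ v * t - y := by nlinarith
  have : 0 ≤ (v * t - y) * (v * t - y - v * (t - τ)) / (s * (t - τ)) := by positivity
  linarith

lemma exp_mul_gaussianPDFReal_mul_sq_setIntegral_Ioi_le {s v τ t y : ℝ} (hs : 0 < s) (hv : 0 ≤ v)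
    (hτ : 0 < τ) (hτt : τ < t) (hy : y ≤ v * τ) :
    exp τ * gaussianPDFReal 0 (s * τ).toNNReal y
        * (∫ z in Ioi (v * t), exp (t - τ) * gaussianPDFReal y (s * (t - τ)).toNNReal z) ^ 2
      ≤ exp (-(v ^ 2 / (2 * s) - 1) * (2 * t - τ))
          * gaussianPDFReal (v * τ) (s * τ).toNNReal y := by
  have htτ : 0 < t - τ := sub_pos.2 hτt
  have hv₁ : ((s * τ).toNNReal : ℝ) = s * τ := Real.coe_toNNReal _ (by positivity)
  have hv₂ : ((s * (t - τ)).toNNReal : ℝ) = s * (t - τ) := Real.coe_toNNReal _ (by positivity)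
  have hinner : ∫ z in Ioi (v * t), exp (t - τ) * gaussianPDFReal y (s * (t - τ)).toNNReal z
      ≤ exp (t - τ) * exp (-(v * t - y) ^ 2 / (2 * (s * (t - τ)))) := by
    rw [integral_const_mul]
    gcongr
    have := setIntegral_Ioi_gaussianPDFReal_le (hy.trans (mul_le_mul_of_nonneg_left hτt.le hv))
      (Real.toNNReal_pos.2 (by positivity : 0 < s * (t - τ))).ne'
    rwa [hv₂] at this
  calc _ ≤ exp τ * gaussianPDFReal 0 (s * τ).toNNReal y
          * (exp (t - τ) * exp (-(v * t - y) ^ 2 / (2 * (s * (t - τ))))) ^ 2 := by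
        gcongr
        · exact mul_nonneg (exp_nonneg _) (gaussianPDFReal_nonneg ..)
        · exact integral_nonneg fun z => mul_nonneg (exp_nonneg _) (gaussianPDFReal_nonneg ..)
    _ = (√(2 * π * (s * τ)))⁻¹
          * exp (τ - y ^ 2 / (2 * (s * τ)) + 2 * (t - τ) - (v * t - y) ^ 2 / (s * (t - τ))) := by
        have hsplit : τ - y ^ 2 / (2 * (s * τ)) + 2 * (t - τ) - (v * t - y) ^ 2 / (s * (t - τ))
            = τ + -(y - 0) ^ 2 / (2 * (s * τ))
              + (t - τ + -(v * t - y) ^ 2 / (2 * (s * (t - τ))))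
              + (t - τ + -(v * t - y) ^ 2 / (2 * (s * (t - τ)))) := by
          field_simp
          ring
        simp only [gaussianPDFReal, hv₁, hsplit, exp_add]
        ring
    _ ≤ (√(2 * π * (s * τ)))⁻¹
          * exp (-(v ^ 2 / (2 * s) - 1) * (2 * t - τ) - (y - v * τ) ^ 2 / (2 * (s * τ))) := by
        gcongr (√(2 * π * (s * τ)))⁻¹ * exp ?_
        exact second_moment_exponent_le hs hv hτ hτt hy
    _ = _ := by
        rw [gaussianPDFReal, hv₁, sub_eq_add_neg, exp_add, neg_div]
        ring

/-- Gaussian double-integral bound in the second moment computation for the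
number of leftward-leaning particles of the BBM beyond vt. -/
theorem stmt_19 (σ v τ t : ℝ) (hσ : 0 < σ) (hv : 0 ≤ v) (hτ : 0 < τ) (hτt : τ < t) :
    (∫ y in Set.Iic (v * τ),
        (1 / Real.sqrt (2 * Real.pi * σ ^ 2 * τ))
          * Real.exp (τ - y ^ 2 / (2 * σ ^ 2 * τ))
          * (∫ z in Set.Ioi (v * t),
              (1 / Real.sqrt (2 * Real.pi * σ ^ 2 * (t - τ)))
                * Real.exp ((t - τ) - (z - y) ^ 2 / (2 * σ ^ 2 * (t - τ)))) ^ 2)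
      ≤ Real.exp (-(v ^ 2 / (2 * σ ^ 2) - 1) * (2 * t - τ)) := by
  have hs : 0 < σ ^ 2 := by positivity
  have hpast : ∀ y, 1 / √(2 * π * σ ^ 2 * τ) * exp (τ - y ^ 2 / (2 * σ ^ 2 * τ))
      = exp τ * gaussianPDFReal 0 (σ ^ 2 * τ).toNNReal y := fun y => by
    simpa only [sub_zero] using
      one_div_sqrt_mul_exp_eq_exp_mul_gaussianPDFReal (by positivity) τ 0 y
  have hfuture : ∀ y z,
      1 / √(2 * π * σ ^ 2 * (t - τ)) * exp (t - τ - (z - y) ^ 2 / (2 * σ ^ 2 * (t - τ)))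
        = exp (t - τ) * gaussianPDFReal y (σ ^ 2 * (t - τ)).toNNReal z := fun y z =>
    one_div_sqrt_mul_exp_eq_exp_mul_gaussianPDFReal (mul_nonneg hs.le (sub_nonneg.2 hτt.le))
      (t - τ) y z
  simp_rw [hpast, hfuture]
  refine setIntegral_le_of_le_mul_gaussianPDFReal (Real.toNNReal_pos.2 (by positivity)).ne'
    measurableSet_Iic (exp_nonneg _) (fun y _ => ?_) fun y hy =>
      exp_mul_gaussianPDFReal_mul_sq_setIntegral_Ioi_le hs hv hτ hτt hy
  exact mul_nonneg (mul_nonneg (exp_nonneg _) (gaussianPDFReal_nonneg ..)) (sq_nonneg _)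
end
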